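/- Let A and B be *-algebras and let j : A → B be a surjective *-homomorphism (for instance, the canonical surjection A → A/I onto the quotient by a *-ideal I). If the Lebesgue decomposition of representable positive functionals over A is unique, then the Lebesgue decomposition of representable positive functionals over B is unique. -/
import Mathlib


open scoped ComplexOrder InnerProductSpace

section StarAlgebraDefs

variable {A : Type} [NonUnitalRing A] [Module ℂ A] [SMulCommClass ℂ A A]
  [IsScalarTower ℂ A A] [StarRing A] [StarModule ℂ A]

/-- A linear functional on a `⋆`-algebra is positive if `0 ≤ f (a⋆ * a)` for every `a`. -/
def IsPosFn (f : A →ₗ[ℂ] ℂ) : Prop := ∀ a : A, 0 ≤ f (star a * a)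

/-- Order on positive functionals: `f ≤ g` iff `g - f` is positive. -/
def FnLE (f g : A →ₗ[ℂ] ℂ) : Prop := IsPosFn (g - f)

/-- `f` is induced by a `⋆`-representation on the Hilbert space `H` with a cyclic vector. -/
def IsRepOn (f : A →ₗ[ℂ] ℂ) (H : Type) [NormedAddCommGroup H]
    [InnerProductSpace ℂ H] [CompleteSpace H] : Prop :=
  ∃ (π : A →⋆ₙₐ[ℂ] (H →L[ℂ] H)) (ξ : H),
    DenseRange (fun a : A => π a ξ) ∧ ∀ a : A, f a = ⟪ξ, π a ξ⟫_ℂ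

/-- A positive linear functional is representable if it is induced by a cyclic
`⋆`-representation on some complex Hilbert space. -/
def IsRepresentable (f : A →ₗ[ℂ] ℂ) : Prop :=
  ∃ (H : Type) (_ : NormedAddCommGroup H) (_ : InnerProductSpace ℂ H) (_ : CompleteSpace H),
    IsRepOn f H

/-- Absolute continuity `f ≪ g` for representable positive functionals: `f` is the pointwise
limit of an increasing sequence of representable positive functionals `fₙ` with
`fₙ ≤ αₙ • g` for some positive reals `αₙ`. -/
def AbsContR (f g : A →ₗ[ℂ] ℂ) : Prop :=
  ∃ (fn : ℕ → (A →ₗ[ℂ] ℂ)) (α : ℕ → ℝ),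
    (∀ n, IsRepresentable (fn n) ∧ IsPosFn (fn n)) ∧
    (∀ n, 0 < α n) ∧
    (∀ n, FnLE (fn n) (fn (n + 1))) ∧
    (∀ n, FnLE (fn n) (((α n : ℂ)) • g)) ∧
    (∀ a : A, Filter.Tendsto (fun n => fn n a) Filter.atTop (nhds (f a)))

/-- Singularity `f ⊥ g` for representable positive functionals: the only representable
positive functional dominated by both `f` and `g` is `0`. -/
def SingularR (f g : A →ₗ[ℂ] ℂ) : Prop :=
  ∀ p : A →ₗ[ℂ] ℂ, IsRepresentable p → IsPosFn p → FnLE p f → FnLE p g → p = 0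

/-- `f = fr + fs` is a Lebesgue decomposition of `f` with respect to `g` (representable
positive functionals). -/
def IsLebDecompR (f g fr fs : A →ₗ[ℂ] ℂ) : Prop :=
  IsRepresentable fr ∧ IsPosFn fr ∧ IsRepresentable fs ∧ IsPosFn fs ∧
    f = fr + fs ∧ AbsContR fr g ∧ SingularR fs g

/-- The Lebesgue decomposition of `f` with respect to `g` is unique. -/
def LebDecompUniqueForR (f g : A →ₗ[ℂ] ℂ) : Prop :=
  ∀ fr fs fr' fs' : A →ₗ[ℂ] ℂ, IsLebDecompR f g fr fs → IsLebDecompR f g fr' fs' →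
    fr = fr' ∧ fs = fs'

end StarAlgebraDefs

/-- The Lebesgue decomposition of representable positive functionals over `A` is unique. -/
def LebDecompUniqueR (A : Type) [NonUnitalRing A] [Module ℂ A] [SMulCommClass ℂ A A]
    [IsScalarTower ℂ A A] [StarRing A] [StarModule ℂ A] : Prop :=
  ∀ f g : A →ₗ[ℂ] ℂ, IsRepresentable f → IsPosFn f → IsRepresentable g → IsPosFn g →
    LebDecompUniqueForR f g

section PullbackHelpers

variable {A : Type} [NonUnitalRing A] [Module ℂ A] [SMulCommClass ℂ A A]
  [IsScalarTower ℂ A A] [StarRing A] [StarModule ℂ A]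
  {B : Type} [NonUnitalRing B] [Module ℂ B] [SMulCommClass ℂ B B]
  [IsScalarTower ℂ B B] [StarRing B] [StarModule ℂ B]

/-- The underlying linear map of a star algebra homomorphism. -/
def jLin (j : A →⋆ₙₐ[ℂ] B) : A →ₗ[ℂ] B :=
  { toFun := j, map_add' := map_add j, map_smul' := map_smul j }

lemma jLin_apply (j : A →⋆ₙₐ[ℂ] B) (a : A) : jLin j a = j a := rfl

lemma jLin_star_mul (j : A →⋆ₙₐ[ℂ] B) (a : A) :
    jLin j (star a * a) = star (j a) * j a := by
  simp [jLin_apply, map_mul, map_star]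

lemma pos_comp (j : A →⋆ₙₐ[ℂ] B) {f : B →ₗ[ℂ] ℂ} (hf : IsPosFn f) :
    IsPosFn (f.comp (jLin j)) := fun a => by
  have := hf (j a)
  simpa [LinearMap.comp_apply, jLin_star_mul] using this

lemma fnLE_comp (j : A →⋆ₙₐ[ℂ] B) {f g : B →ₗ[ℂ] ℂ} (h : FnLE f g) :
    FnLE (f.comp (jLin j)) (g.comp (jLin j)) := fun a => by
  have := h (j a)
  simpa [LinearMap.sub_apply, LinearMap.comp_apply, jLin_star_mul] using this

lemma rep_comp (j : A →⋆ₙₐ[ℂ] B) (hj : Function.Surjective j) {f : B →ₗ[ℂ] ℂ}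
    (hf : IsRepresentable f) : IsRepresentable (f.comp (jLin j)) := by
  obtain ⟨H, i1, i2, i3, π, ξ, hd, heq⟩ := hf
  refine ⟨H, i1, i2, i3, π.comp j, ξ, ?_, fun a => heq (j a)⟩
  have hrange : Set.range (fun a : A => (π.comp j) a ξ) = Set.range (fun b : B => π b ξ) := by
    ext v
    constructor
    · rintro ⟨a, ha⟩; exact ⟨j a, ha⟩
    · rintro ⟨b, hb⟩; obtain ⟨a, rfl⟩ := hj b; exact ⟨a, hb⟩
  show Dense (Set.range fun a : A => (π.comp j) a ξ)
  rw [hrange]; exact hd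

lemma absCont_comp (j : A →⋆ₙₐ[ℂ] B) (hj : Function.Surjective j) {f g : B →ₗ[ℂ] ℂ}
    (h : AbsContR f g) : AbsContR (f.comp (jLin j)) (g.comp (jLin j)) := by
  obtain ⟨fn, α, hrp, hα, hmono, hdom, hlim⟩ := h
  refine ⟨fun n => (fn n).comp (jLin j), α, fun n => ⟨rep_comp j hj (hrp n).1, pos_comp j (hrp n).2⟩,
    hα, fun n => fnLE_comp j (hmono n), fun n => ?_, fun a => hlim (j a)⟩
  have := fnLE_comp j (hdom n)
  rwa [LinearMap.smul_comp] at this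

/-- Factoring a representable positive functional through `j`, assuming it vanishes on
positive elements of the kernel. -/
lemma factor_through (j : A →⋆ₙₐ[ℂ] B) (hj : Function.Surjective j) {p : A →ₗ[ℂ] ℂ}
    (hrep : IsRepresentable p)
    (hker : ∀ a : A, j a = 0 → p (star a * a) = 0) :
    ∃ q : B →ₗ[ℂ] ℂ, IsRepresentable q ∧ ∀ a : A, q (j a) = p a := by
  obtain ⟨H, i1, i2, i3, π, ξ, hd, heq⟩ := hrep
  -- π c ξ = 0 when j c = 0
  have hcξ : ∀ c : A, j c = 0 → π c ξ = 0 := by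
    intro c hc
    have hinner : p (star c * c) = ⟪π c ξ, π c ξ⟫_ℂ := by
      rw [heq, map_mul, map_star]
      rw [show (star (π c) * π c) ξ = ContinuousLinearMap.adjoint (π c) (π c ξ) from rfl]
      exact ContinuousLinearMap.adjoint_inner_right _ _ _
    have h0 : ⟪π c ξ, π c ξ⟫_ℂ = 0 := by rw [← hinner]; exact hker c hc
    exact inner_self_eq_zero.mp h0
  -- π c = 0 when j c = 0
  have hc0 : ∀ c : A, j c = 0 → π c = 0 := by
    intro c hc
    have key : (⇑(π c)) ∘ (fun a : A => π a ξ) = (fun _ : H => (0 : H)) ∘ (fun a : A => π a ξ) := by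
      funext x
      show π c (π x ξ) = 0
      rw [← ContinuousLinearMap.mul_apply, ← map_mul]
      exact hcξ _ (by rw [map_mul, hc, zero_mul])
    have := hd.equalizer (π c).continuous continuous_const key
    ext v
    exact congrFun this v
  -- factor the linear maps through the quotient
  set jl := jLin j with hjl
  have hjsurj : Function.Surjective jl := hj
  let πL : A →ₗ[ℂ] (H →L[ℂ] H) :=
    { toFun := fun a => π a, map_add' := map_add π, map_smul' := map_smul π }
  have hKπ : LinearMap.ker jl ≤ LinearMap.ker πL := by
    intro a ha
    exact hc0 a ha
  let e : (A ⧸ LinearMap.ker jl) ≃ₗ[ℂ] B := jl.quotKerEquivOfSurjective hjsurj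
  have he : ∀ a : A, e (Submodule.Quotient.mk a) = j a := by
    intro a
    simp [e, LinearMap.quotKerEquivOfSurjective]
    rfl
  let σl : B →ₗ[ℂ] (H →L[ℂ] H) := ((LinearMap.ker jl).liftQ πL hKπ).comp e.symm.toLinearMap
  have hσ : ∀ a : A, σl (j a) = π a := by
    intro a
    have h1 : e.symm (j a) = Submodule.Quotient.mk a := by
      apply e.injective
      rw [e.apply_symm_apply, he]
    show ((LinearMap.ker jl).liftQ πL hKπ) (e.symm (j a)) = π a
    rw [h1, Submodule.liftQ_apply]
    rfl
  let σ : B →⋆ₙₐ[ℂ] (H →L[ℂ] H) :=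
    { toFun := σl, map_smul' := map_smul σl, map_zero' := map_zero σl,
      map_add' := map_add σl,
      map_mul' := by
        intro b b'
        obtain ⟨a, rfl⟩ := hj b; obtain ⟨a', rfl⟩ := hj b'
        show σl (j a * j a') = σl (j a) * σl (j a')
        rw [← map_mul j, hσ, hσ, hσ, map_mul],
      map_star' := by
        intro b
        obtain ⟨a, rfl⟩ := hj b
        show σl (star (j a)) = star (σl (j a))
        rw [← map_star j, hσ, hσ, map_star] }
  let q : B →ₗ[ℂ] ℂ :=
    { toFun := fun b => ⟪ξ, σl b ξ⟫_ℂ,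
      map_add' := fun b b' => by simp [map_add, inner_add_right],
      map_smul' := fun c b => by simp [map_smul, inner_smul_right] }
  have hq : ∀ a : A, q (j a) = p a := by
    intro a
    show ⟪ξ, σl (j a) ξ⟫_ℂ = p a
    rw [hσ, heq]
  refine ⟨q, ⟨H, i1, i2, i3, σ, ξ, ?_, fun b => rfl⟩, hq⟩
  have hrange : Set.range (fun b : B => σ b ξ) = Set.range (fun a : A => π a ξ) := by
    ext v
    constructor
    · rintro ⟨b, hb⟩
      obtain ⟨a, rfl⟩ := hj b
      exact ⟨a, by rw [← hb]; exact (congrArg (fun T : H →L[ℂ] H => T ξ) (hσ a)).symm⟩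
    · rintro ⟨a, ha⟩
      exact ⟨j a, by rw [← ha]; exact congrArg (fun T : H →L[ℂ] H => T ξ) (hσ a)⟩
  show Dense (Set.range fun b : B => σ b ξ)
  rw [hrange]; exact hd

lemma singular_comp (j : A →⋆ₙₐ[ℂ] B) (hj : Function.Surjective j) {fs g : B →ₗ[ℂ] ℂ}
    (hs : SingularR fs g) : SingularR (fs.comp (jLin j)) (g.comp (jLin j)) := by
  intro p hrep hpos hp1 hp2
  have hker : ∀ a : A, j a = 0 → p (star a * a) = 0 := by
    intro a ha
    have hup : (fs.comp (jLin j)) (star a * a) = 0 := by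
      rw [LinearMap.comp_apply, jLin_star_mul, ha]
      simp
    have h1 := hp1 a
    rw [LinearMap.sub_apply, hup] at h1
    have h2 : p (star a * a) ≤ 0 := by simpa using h1
    exact le_antisymm h2 (hpos a)
  obtain ⟨q, hqrep, hq⟩ := factor_through j hj hrep hker
  have hqpos : IsPosFn q := by
    intro b
    obtain ⟨a, rfl⟩ := hj b
    have : star (j a) * j a = j (star a * a) := by rw [map_mul, map_star]
    rw [this, hq]
    exact hpos a
  have hq1 : FnLE q fs := by
    intro b
    obtain ⟨a, rfl⟩ := hj b
    have h1 := hp1 a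
    have hsm : star (j a) * j a = j (star a * a) := by rw [map_mul, map_star]
    rw [LinearMap.sub_apply, hsm, hq]
    rw [LinearMap.sub_apply, LinearMap.comp_apply] at h1
    exact h1
  have hq2 : FnLE q g := by
    intro b
    obtain ⟨a, rfl⟩ := hj b
    have h1 := hp2 a
    have hsm : star (j a) * j a = j (star a * a) := by rw [map_mul, map_star]
    rw [LinearMap.sub_apply, hsm, hq]
    rw [LinearMap.sub_apply, LinearMap.comp_apply] at h1
    exact h1
  have hq0 := hs q hqrep hqpos hq1 hq2
  ext a
  rw [← hq a, hq0]
  rfl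

lemma decomp_comp (j : A →⋆ₙₐ[ℂ] B) (hj : Function.Surjective j) {f g fr fs : B →ₗ[ℂ] ℂ}
    (h : IsLebDecompR f g fr fs) :
    IsLebDecompR (f.comp (jLin j)) (g.comp (jLin j)) (fr.comp (jLin j)) (fs.comp (jLin j)) := by
  obtain ⟨h1, h2, h3, h4, h5, h6, h7⟩ := h
  exact ⟨rep_comp j hj h1, pos_comp j h2, rep_comp j hj h3, pos_comp j h4,
    by rw [h5, LinearMap.add_comp], absCont_comp j hj h6, singular_comp j hj h7⟩

end PullbackHelpers


/-- **Lemma 2.19** (in the equivalent form for surjective `⋆`-homomorphisms): if the Lebesgue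
decomposition of representable positive functionals over `A` is unique and `j : A → B` is a
surjective `⋆`-homomorphism (e.g. the quotient map by a `⋆`-ideal), then the Lebesgue
decomposition of representable positive functionals over `B` is unique. -/
theorem lebesgue_unique_of_surjective_starHom
    {A : Type} [NonUnitalRing A] [Module ℂ A] [SMulCommClass ℂ A A]
    [IsScalarTower ℂ A A] [StarRing A] [StarModule ℂ A]
    {B : Type} [NonUnitalRing B] [Module ℂ B] [SMulCommClass ℂ B B]
    [IsScalarTower ℂ B B] [StarRing B] [StarModule ℂ B]
    (j : A →⋆ₙₐ[ℂ] B) (hj : Function.Surjective j)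
    (hA : LebDecompUniqueR A) : LebDecompUniqueR B := by
  intro f g hfrep hfpos hgrep hgpos fr fs fr' fs' h1 h2
  have key := hA (f.comp (jLin j)) (g.comp (jLin j)) (rep_comp j hj hfrep) (pos_comp j hfpos)
    (rep_comp j hj hgrep) (pos_comp j hgpos)
    (fr.comp (jLin j)) (fs.comp (jLin j)) (fr'.comp (jLin j)) (fs'.comp (jLin j))
    (decomp_comp j hj h1) (decomp_comp j hj h2)
  constructor
  · ext b
    obtain ⟨a, rfl⟩ := hj b
    exact DFunLike.congr_fun key.1 a
  · ext b
    obtain ⟨a, rfl⟩ := hj b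
    exact DFunLike.congr_fun key.2 a
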